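/- arXiv:2410.16142 — 2 statements merged into one kernel-verified Lean document; each statement's English description precedes it below -/
import Mathlib

section
/- Let D ⊆ B be an extension of integral domains with K the quotient field of D, and let E be a nonempty subset of K. The following are equivalent: (1) E ⊆ D; (2) Int^R_B(D,D) ⊆ Int^R_B(E,D); (3) D[X] ⊆ Int^R_B(E,D). -/
open Polynomial

variable {Ω : Type*} [Field Ω]

/-- Evaluation of a rational function at a point of `Ω`. -/
noncomputable def rfEval (e : Ω) (φ : RatFunc Ω) : Ω :=
  RatFunc.eval (RingHom.id Ω) e φ

/-- `φ` is defined at every point of `E` (its reduced denominator does not vanish)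
and maps `E` into `T`. -/
def MapsInto (E T : Set Ω) (φ : RatFunc Ω) : Prop :=
  ∀ e ∈ E, Polynomial.eval e φ.denom ≠ 0 ∧ rfEval e φ ∈ T

/-- Polynomials with all coefficients in the subring `B`. -/
def polyIn (B : Subring Ω) : Set (Polynomial Ω) := {p | ∀ i, p.coeff i ∈ B}

/-- `B(X)`: the rational functions expressible as a quotient of two polynomials
with coefficients in `B` (nonzero denominator). -/
def ratIn (B : Subring Ω) : Set (RatFunc Ω) :=
  {φ | ∃ f ∈ polyIn B, ∃ g ∈ polyIn B, g ≠ 0 ∧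
    φ = algebraMap (Polynomial Ω) (RatFunc Ω) f / algebraMap (Polynomial Ω) (RatFunc Ω) g}

/-- `Int^R_B(E,D)`: the `D`-valued `B`-rational functions on `E`. -/
def IntRB (B : Subring Ω) (E : Set Ω) (D : Subring Ω) : Set (RatFunc Ω) :=
  {φ | φ ∈ ratIn B ∧ MapsInto E (D : Set Ω) φ}

/-- The set of fractions of elements of `B`, i.e. the quotient field of `B`
inside the ambient field. -/
def fracIn (B : Subring Ω) : Set Ω := {x | ∃ a ∈ B, ∃ b ∈ B, b ≠ 0 ∧ x = a / b}

lemma one_mem_polyIn (B : Subring Ω) : (1 : Polynomial Ω) ∈ polyIn B := by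
  intro i
  rw [coeff_one]
  split_ifs
  exacts [B.one_mem, B.zero_mem]

lemma X_mem_polyIn (B : Subring Ω) : (X : Polynomial Ω) ∈ polyIn B := by
  intro i
  rw [coeff_X]
  split_ifs
  exacts [B.one_mem, B.zero_mem]

lemma polyIn_mono {D B : Subring Ω} (hDB : D ≤ B) : polyIn D ⊆ polyIn B :=
  fun _ hp i => hDB (hp i)

lemma eval_mem_of_mem_polyIn {D : Subring Ω} {p : Polynomial Ω} (hp : p ∈ polyIn D) {e : Ω}
    (he : e ∈ D) : p.eval e ∈ D := by
  rw [eval_eq_sum_range]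
  exact D.sum_mem fun i _ => D.mul_mem (hp i) (D.pow_mem he i)

lemma rfEval_algebraMap (e : Ω) (p : Polynomial Ω) :
    rfEval e (algebraMap (Polynomial Ω) (RatFunc Ω) p) = p.eval e := by
  simp [rfEval, eval, -eval₂_id]

lemma algebraMap_mem_ratIn {B : Subring Ω} {p : Polynomial Ω} (hp : p ∈ polyIn B) :
    algebraMap (Polynomial Ω) (RatFunc Ω) p ∈ ratIn B :=
  ⟨p, hp, 1, one_mem_polyIn B, one_ne_zero, by simp⟩

lemma mapsInto_algebraMap_iff {E T : Set Ω} {p : Polynomial Ω} :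
    MapsInto E T (algebraMap (Polynomial Ω) (RatFunc Ω) p) ↔ Set.MapsTo p.eval E T := by
  simp only [MapsInto, RatFunc.denom_algebraMap, rfEval_algebraMap, eval_one, ne_eq,
    one_ne_zero, not_false_eq_true, true_and, Set.MapsTo]

lemma intRB_antitone_set (B D : Subring Ω) {E E' : Set Ω} (hE : E ⊆ E') :
    IntRB B E' D ⊆ IntRB B E D :=
  fun _ hφ => ⟨hφ.1, fun e he => hφ.2 e (hE he)⟩

lemma algebraMap_mem_intRB {D B : Subring Ω} {E : Set Ω} (hDB : D ≤ B)
    (hED : E ⊆ (D : Set Ω)) {p : Polynomial Ω} (hp : p ∈ polyIn D) :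
    algebraMap (Polynomial Ω) (RatFunc Ω) p ∈ IntRB B E D :=
  ⟨algebraMap_mem_ratIn (polyIn_mono hDB hp),
    mapsInto_algebraMap_iff.2 fun _ he => eval_mem_of_mem_polyIn hp (hED he)⟩

lemma subset_of_algebraMap_X_mem_intRB {D B : Subring Ω} {E : Set Ω}
    (hX : algebraMap (Polynomial Ω) (RatFunc Ω) X ∈ IntRB B E D) : E ⊆ (D : Set Ω) :=
  fun e he => by simpa using mapsInto_algebraMap_iff.1 hX.2 he

theorem subset_iff_intRB_subset_iff_polyD_subset_general {Ω : Type*} [Field Ω]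
    (D B : Subring Ω) (E : Set Ω)
    (hDB : D ≤ B) :
    (E ⊆ (D : Set Ω) ↔ IntRB B (D : Set Ω) D ⊆ IntRB B E D) ∧
    (E ⊆ (D : Set Ω) ↔
      ∀ p ∈ polyIn D, algebraMap (Polynomial Ω) (RatFunc Ω) p ∈ IntRB B E D) := by
  have hX : algebraMap (Polynomial Ω) (RatFunc Ω) X ∈ IntRB B (D : Set Ω) D :=
    algebraMap_mem_intRB hDB subset_rfl (X_mem_polyIn D)
  refine ⟨⟨intRB_antitone_set B D, fun h => subset_of_algebraMap_X_mem_intRB (h hX)⟩,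
    ⟨fun hED _ => algebraMap_mem_intRB hDB hED,
      fun h => subset_of_algebraMap_X_mem_intRB (h X (X_mem_polyIn D))⟩⟩

/-- `E ⊆ D` iff `Int^R_B(D,D) ⊆ Int^R_B(E,D)` iff `D[X] ⊆ Int^R_B(E,D)`. -/
theorem subset_iff_intRB_subset_iff_polyD_subset {Ω : Type*} [Field Ω]
    (D B : Subring Ω) (K : Subfield Ω) (E : Set Ω)
    (hDB : D ≤ B) (hK : (K : Set Ω) = fracIn D) (hE : E ⊆ (K : Set Ω)) (hEne : E.Nonempty) :
    (E ⊆ (D : Set Ω) ↔ IntRB B (D : Set Ω) D ⊆ IntRB B E D) ∧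
    (E ⊆ (D : Set Ω) ↔
      ∀ p ∈ polyIn D, algebraMap (Polynomial Ω) (RatFunc Ω) p ∈ IntRB B E D) :=
  subset_iff_intRB_subset_iff_polyD_subset_general D B E hDB
end

section
/- Let D ⊆ B be an extension of integral domains, K the quotient field of D, and E an infinite subset of K. Then Int^R_B(E,D) = Int^R(E,D), i.e., every rational function over B (in fact over any field extension of K) that maps E into D already lies in K(X). -/
open Polynomial

variable {Ω : Type*} [Field Ω]

/-! A rational function `φ = p / q` over the big field is pinned down by its values at
`deg p + deg q + 2` points: the conditions `a(e) = φ(e) b(e)` on pairs `(a, b)` with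
`deg a ≤ deg p`, `deg b ≤ deg q` form a square homogeneous linear system. When the points and
values lie in `K`, the system has coefficients in `K`; since `(p, q)` is a nonzero solution,
its determinant vanishes, so it also has a nonzero solution `(a, b)` over `K`, and
`a q - p b` has too many roots, whence `φ = a / b ∈ K(X)`. Conversely, denominators of
`K`-coefficients can be cleared inside `D ⊆ B`. -/

open Matrix

theorem Matrix.exists_mulVec_eq_zero_of_map {K L : Type*} [Field K] [Field L] (f : K →+* L)
    {ι : Type*} [Fintype ι] [DecidableEq ι] {M : Matrix ι ι K} {v : ι → L} (hv : v ≠ 0)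
    (hMv : M.map f *ᵥ v = 0) : ∃ w ≠ 0, M *ᵥ w = 0 := by
  refine Matrix.exists_mulVec_eq_zero_iff.2 (f.injective ?_)
  rw [map_zero, RingHom.map_det, RingHom.mapMatrix_apply]
  exact Matrix.exists_mulVec_eq_zero_iff.1 ⟨v, hv, hMv⟩

section RationalInterpolation

variable {R S ι : Type*} [CommRing R] [CommRing S]

def rationalInterpolationMatrix (n m : ℕ) (x y : ι → R) : Matrix ι (Fin n ⊕ Fin m) R :=
  Matrix.of fun r => Sum.elim (fun i => x r ^ (i : ℕ)) (fun j => -(y r * x r ^ (j : ℕ)))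

theorem eval_ofFn [DecidableEq R] {n : ℕ} (a : Fin n → R) (x : R) :
    (ofFn n a).eval x = ∑ i, a i * x ^ (i : ℕ) := by
  simp [ofFn_eq_sum_monomial, eval_finsetSum]

theorem rationalInterpolationMatrix_mulVec [DecidableEq R] {n m : ℕ} (x y : ι → R)
    (a : Fin n → R) (b : Fin m → R) :
    rationalInterpolationMatrix n m x y *ᵥ Sum.elim a b =
      fun r => (ofFn n a).eval (x r) - y r * (ofFn m b).eval (x r) := by
  funext r
  simp [rationalInterpolationMatrix, Matrix.mulVec, dotProduct, eval_ofFn, Finset.mul_sum,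
    mul_comm, mul_left_comm, sub_eq_add_neg]

theorem rationalInterpolationMatrix_map (f : R →+* S) (n m : ℕ) (x y : ι → R) :
    (rationalInterpolationMatrix n m x y).map f =
      rationalInterpolationMatrix n m (f ∘ x) (f ∘ y) := by
  ext r (i | j) <;> simp [rationalInterpolationMatrix]

end RationalInterpolation

theorem exists_eval_eq_mul_eval_of_map {K L : Type*} [Field K] [Field L] (f : K →+* L)
    {n m : ℕ} (x y : Fin (n + 1) ⊕ Fin (m + 1) → K) {p q : L[X]} (hp : p.natDegree ≤ n)
    (hq : q.natDegree ≤ m) (hpq : p ≠ 0 ∨ q ≠ 0)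
    (h : ∀ r, p.eval (f (x r)) = f (y r) * q.eval (f (x r))) :
    ∃ a b : K[X], (a ≠ 0 ∨ b ≠ 0) ∧ a.natDegree ≤ n ∧ b.natDegree ≤ m ∧
      ∀ r, a.eval (x r) = y r * b.eval (x r) := by
  classical
  have hp' : ofFn (n + 1) (toFn (n + 1) p) = p := ofFn_comp_toFn_eq_id_of_natDegree_lt (by omega)
  have hq' : ofFn (m + 1) (toFn (m + 1) q) = q := ofFn_comp_toFn_eq_id_of_natDegree_lt (by omega)
  have hv : Sum.elim (toFn (n + 1) p) (toFn (m + 1) q) ≠ 0 := by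
    intro hv
    rcases hpq with hp0 | hq0
    · exact hp0 (by rw [← hp', show toFn (n + 1) p = 0 from funext fun i => congrFun hv (.inl i),
        map_zero])
    · exact hq0 (by rw [← hq', show toFn (m + 1) q = 0 from funext fun j => congrFun hv (.inr j),
        map_zero])
  have hMv : (rationalInterpolationMatrix (n + 1) (m + 1) x y).map f *ᵥ
      Sum.elim (toFn (n + 1) p) (toFn (m + 1) q) = 0 := by
    rw [rationalInterpolationMatrix_map, rationalInterpolationMatrix_mulVec, hp', hq']
    funext r
    exact sub_eq_zero.2 (h r)
  obtain ⟨w, hw, hMw⟩ := Matrix.exists_mulVec_eq_zero_of_map f hv hMv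
  rw [← Sum.elim_comp_inl_inr w] at hw hMw
  rw [rationalInterpolationMatrix_mulVec] at hMw
  refine ⟨ofFn _ (w ∘ Sum.inl), ofFn _ (w ∘ Sum.inr), ?_,
    Nat.lt_succ_iff.1 (ofFn_natDegree_lt (by omega) _),
    Nat.lt_succ_iff.1 (ofFn_natDegree_lt (by omega) _),
    fun r => sub_eq_zero.1 (congrFun hMw r)⟩
  contrapose! hw
  rw [(injective_ofFn _).eq_iff' (map_zero _), (injective_ofFn _).eq_iff' (map_zero _)] at hw
  rw [hw.1, hw.2, Sum.elim_zero_zero]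

theorem mul_eq_mul_of_eval_eq_mul_eval {R ι : Type*} [CommRing R] [IsDomain R] [Fintype ι]
    {x : ι → R} (hx : Function.Injective x) (y : ι → R) {a b a' b' : R[X]} {n m : ℕ}
    (ha : a.natDegree ≤ n) (hb : b.natDegree ≤ m) (ha' : a'.natDegree ≤ n)
    (hb' : b'.natDegree ≤ m) (hcard : n + m < Fintype.card ι)
    (h : ∀ r, a.eval (x r) = y r * b.eval (x r))
    (h' : ∀ r, a'.eval (x r) = y r * b'.eval (x r)) :
    a' * b = a * b' := by
  refine eq_of_natDegree_lt_card_of_eval_eq _ _ hx (fun r => ?_) ?_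
  · rw [eval_mul, eval_mul, h r, h' r]
    ring
  · have := natDegree_mul_le (p := a') (q := b)
    have := natDegree_mul_le (p := a) (q := b')
    omega

theorem subset_fracIn (D : Subring Ω) : (D : Set Ω) ⊆ fracIn D :=
  fun x hx => ⟨x, hx, 1, one_mem D, one_ne_zero, (div_one x).symm⟩

theorem fracIn_mono {D B : Subring Ω} (h : D ≤ B) : fracIn D ⊆ fracIn B :=
  fun _ ⟨a, ha, b, hb, hb0, hx⟩ => ⟨a, h ha, b, h hb, hb0, hx⟩

theorem MapsInto.mono {E T T' : Set Ω} {φ : RatFunc Ω} (h : MapsInto E T φ) (hT : T ⊆ T') :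
    MapsInto E T' φ :=
  fun e he => (h e he).imp_right (@hT _)

theorem C_mul_mem_polyIn {B : Subring Ω} {c : Ω} (hc : c ∈ B) {p : Polynomial Ω} (hp : p ∈ polyIn B) :
    C c * p ∈ polyIn B :=
  fun i => by rw [coeff_C_mul]; exact mul_mem hc (hp i)

theorem exists_C_mul_mem_polyIn {A B : Subring Ω} (hAB : (A : Set Ω) ⊆ fracIn B) {p : Polynomial Ω}
    (hp : p ∈ polyIn A) : ∃ c ∈ B, c ≠ 0 ∧ C c * p ∈ polyIn B := by
  choose a ha b hb hb0 hab using fun i => hAB (hp i)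
  refine ⟨∏ i ∈ p.support, b i, prod_mem fun i _ => hb i,
    Finset.prod_ne_zero_iff.2 fun i _ => hb0 i, fun i => ?_⟩
  rw [coeff_C_mul]
  by_cases hi : i ∈ p.support
  · rw [← Finset.mul_prod_erase _ _ hi, hab i, mul_comm (b i), mul_assoc,
      mul_div_cancel₀ _ (hb0 i)]
    exact mul_mem (prod_mem fun j _ => hb j) (ha i)
  · rw [notMem_support_iff.1 hi, mul_zero]
    exact zero_mem B

theorem ratIn_subset_of_subset_fracIn {A B : Subring Ω} (hAB : (A : Set Ω) ⊆ fracIn B) :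
    ratIn A ⊆ ratIn B := by
  rintro φ ⟨f, hf, g, hg, hg0, rfl⟩
  obtain ⟨c, hc, hc0, hcf⟩ := exists_C_mul_mem_polyIn hAB hf
  obtain ⟨d, hd, hd0, hdg⟩ := exists_C_mul_mem_polyIn hAB hg
  have hcd : (C (d * c) : Polynomial Ω) ≠ 0 := C_ne_zero.2 (mul_ne_zero hd0 hc0)
  refine ⟨C (d * c) * f, ?_, C (d * c) * g, ?_, mul_ne_zero hcd hg0, ?_⟩
  · rw [C_mul, mul_assoc]
    exact C_mul_mem_polyIn hd hcf
  · rw [mul_comm d, C_mul, mul_assoc]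
    exact C_mul_mem_polyIn hc hdg
  · rw [map_mul _ _ f, map_mul _ _ g, mul_div_mul_left _ _ (RatFunc.algebraMap_ne_zero hcd)]

theorem map_mem_polyIn (K : Subfield Ω) (p : K[X]) : p.map K.subtype ∈ polyIn K.toSubring :=
  fun i => by rw [coeff_map]; exact (p.coeff i).2

theorem eval_num_eq_rfEval_mul {e : Ω} {φ : RatFunc Ω} (he : φ.denom.eval e ≠ 0) :
    φ.num.eval e = rfEval e φ * φ.denom.eval e :=
  (div_mul_cancel₀ _ he).symm

theorem mem_ratIn_of_mapsInto {K : Subfield Ω} {E : Set Ω} (hE : E ⊆ K) (hInf : E.Infinite)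
    {φ : RatFunc Ω} (hφ : MapsInto E K φ) : φ ∈ ratIn K.toSubring := by
  set n := φ.num.natDegree
  set m := φ.denom.natDegree
  let ι := Fin (n + 1) ⊕ Fin (m + 1)
  let pts : ι ↪ E :=
    (Fintype.equivFin ι).toEmbedding.trans (Fin.valEmbedding.trans hInf.natEmbedding)
  let x : ι → K := fun r => ⟨pts r, hE (pts r).2⟩
  let y : ι → K := fun r => ⟨rfEval (pts r) φ, (hφ _ (pts r).2).2⟩
  have hx : Function.Injective (K.subtype ∘ x) := fun _ _ h => pts.injective (Subtype.ext h)
  have hφxy : ∀ r, φ.num.eval (K.subtype (x r)) = K.subtype (y r) * φ.denom.eval (K.subtype (x r)) :=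
    fun r => eval_num_eq_rfEval_mul (hφ _ (pts r).2).1
  obtain ⟨a, b, hab, ha, hb, habxy⟩ := exists_eval_eq_mul_eval_of_map K.subtype x y le_rfl le_rfl
    (Or.inr φ.denom_ne_zero) hφxy
  have hmap : ∀ r, (a.map K.subtype).eval (K.subtype (x r)) =
      K.subtype (y r) * (b.map K.subtype).eval (K.subtype (x r)) := by
    simp only [eval_map_apply, habxy, map_mul, implies_true]
  have hcross : a.map K.subtype * φ.denom = φ.num * b.map K.subtype :=
    mul_eq_mul_of_eval_eq_mul_eval hx _ le_rfl le_rfl (natDegree_map_le.trans ha)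
      (natDegree_map_le.trans hb)
      (by simp only [ι, Fintype.card_sum, Fintype.card_fin]; omega) hφxy hmap
  have hb0 : b ≠ 0 := by
    rintro rfl
    rw [Polynomial.map_zero, mul_zero, mul_eq_zero, or_iff_left φ.denom_ne_zero,
      Polynomial.map_eq_zero_iff K.subtype.injective] at hcross
    exact hab.elim (· hcross) (· rfl)
  have hb0' : b.map K.subtype ≠ 0 := Polynomial.map_ne_zero hb0
  refine ⟨a.map K.subtype, map_mem_polyIn K a, b.map K.subtype, map_mem_polyIn K b, hb0', ?_⟩
  rw [← RatFunc.num_div_denom φ, div_eq_div_iff (RatFunc.algebraMap_ne_zero φ.denom_ne_zero)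
    (RatFunc.algebraMap_ne_zero hb0'), ← map_mul, ← map_mul, hcross]

/-- if `E` is an infinite subset of the quotient field `K` of `D`, then
`Int^R_B(E,D) = Int^R(E,D)`, i.e. every `B`-rational function mapping `E` into `D`
already lies in `K(X)`. -/
theorem intRB_eq_intR_of_infinite {Ω : Type*} [Field Ω] (D B : Subring Ω) (K : Subfield Ω)
    (E : Set Ω) (hDB : D ≤ B) (hK : (K : Set Ω) = fracIn D) (hE : E ⊆ (K : Set Ω))
    (hInf : E.Infinite) :
    IntRB B E D = IntRB K.toSubring E D := by
  ext φ
  refine ⟨fun ⟨_, hφ⟩ => ⟨?_, hφ⟩, fun ⟨hφ, hφE⟩ => ⟨?_, hφE⟩⟩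
  · exact mem_ratIn_of_mapsInto hE hInf (hφ.mono (hK ▸ subset_fracIn D))
  · exact ratIn_subset_of_subset_fracIn (hK ▸ fracIn_mono hDB) hφ
end
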